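/- arXiv:0711.4148 — 2 statements merged into one kernel-verified Lean document; each statement's English description precedes it below -/
import Mathlib

section
/- Let N be a nilpotent group, let p and q be distinct primes, let P be a p-subgroup of N (every element of P has p-power order) and let Q be a q-subgroup of N. Then every element of P commutes with every element of Q, i.e., the commutator subgroup ⁅P, Q⁆ is trivial. -/
open scoped commutatorElement

/-- If `⁅x, y⁆` is central, then `⁅x, y ^ k⁆ = ⁅x, y⁆ ^ k`. -/
private lemma commutator_pow_right_aux {G : Type*} [Group G] {x y : G}
    (hc : ⁅x, y⁆ ∈ Subgroup.center G) (k : ℕ) : ⁅x, y ^ k⁆ = ⁅x, y⁆ ^ k := by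
  have hcy : Commute ⁅x, y⁆ y := ((Subgroup.mem_center_iff.mp hc) y).symm
  have h1 : x * y * x⁻¹ = ⁅x, y⁆ * y := by
    simp [commutatorElement_def, mul_assoc]
  calc ⁅x, y ^ k⁆ = x * y ^ k * x⁻¹ * (y ^ k)⁻¹ := commutatorElement_def _ _
    _ = (x * y * x⁻¹) ^ k * (y ^ k)⁻¹ := by rw [conj_pow]
    _ = (⁅x, y⁆ * y) ^ k * (y ^ k)⁻¹ := by rw [h1]
    _ = ⁅x, y⁆ ^ k * y ^ k * (y ^ k)⁻¹ := by rw [hcy.mul_pow]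
    _ = ⁅x, y⁆ ^ k := by group

private lemma commute_of_coprime_orders {G : Type*} [Group G]
    (hG : Group.IsNilpotent G) :
    ∀ x y : G, (orderOf x).Coprime (orderOf y) → orderOf x ≠ 0 → orderOf y ≠ 0 →
      Commute x y := by
  haveI := hG
  refine nilpotent_center_quotient_ind
    (P := fun G _ _ => ∀ x y : G, (orderOf x).Coprime (orderOf y) →
      orderOf x ≠ 0 → orderOf y ≠ 0 → Commute x y) G ?_ ?_
  · intro G _ _ x y _ _ _
    exact Subsingleton.elim _ _
  · intro G _ _ ih x y hco hx hy
    set π : G →* G ⧸ Subgroup.center G := QuotientGroup.mk' (Subgroup.center G)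
    have hdx : orderOf (π x) ∣ orderOf x := orderOf_map_dvd π x
    have hdy : orderOf (π y) ∣ orderOf y := orderOf_map_dvd π y
    have hq : Commute (π x) (π y) :=
      ih (π x) (π y) ((hco.coprime_dvd_left hdx).coprime_dvd_right hdy)
        (fun h => hx (Nat.eq_zero_of_zero_dvd (h ▸ hdx)))
        (fun h => hy (Nat.eq_zero_of_zero_dvd (h ▸ hdy)))
    have hc : ⁅x, y⁆ ∈ Subgroup.center G := by
      have : π ⁅x, y⁆ = 1 := by
        rw [map_commutatorElement]
        exact commutatorElement_eq_one_iff_commute.mpr hq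
      exact (QuotientGroup.eq_one_iff _).mp this
    have hc' : ⁅y, x⁆ ∈ Subgroup.center G := by
      rw [← commutatorElement_inv]
      exact Subgroup.inv_mem _ hc
    -- order of the commutator divides orderOf y
    have hdvd_y : orderOf ⁅x, y⁆ ∣ orderOf y := by
      apply orderOf_dvd_of_pow_eq_one
      rw [← commutator_pow_right_aux hc, pow_orderOf_eq_one]
      simp [commutatorElement_def]
    have hdvd_x : orderOf ⁅x, y⁆ ∣ orderOf x := by
      apply orderOf_dvd_of_pow_eq_one
      have : ⁅y, x⁆ ^ orderOf x = 1 := by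
        rw [← commutator_pow_right_aux hc', pow_orderOf_eq_one]
        simp [commutatorElement_def]
      calc ⁅x, y⁆ ^ orderOf x = (⁅y, x⁆ ^ orderOf x)⁻¹ := by
            rw [← commutatorElement_inv]; rw [inv_pow]
        _ = 1 := by rw [this]; simp
    have : orderOf ⁅x, y⁆ = 1 :=
      Nat.eq_one_of_dvd_coprimes hco hdvd_x hdvd_y
    exact commutatorElement_eq_one_iff_commute.mp (orderOf_eq_one_iff.mp this)

/-- In a nilpotent group, a `p`-subgroup and a `q`-subgroup for distinct primes
`p ≠ q` commute elementwise: `⁅P, Q⁆ = ⊥`. -/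
theorem stmt_2 {N : Type*} [Group N] (hN : Group.IsNilpotent N)
    (p q : ℕ) (hp : p.Prime) (hq : q.Prime) (hpq : p ≠ q)
    (P Q : Subgroup N)
    (hP : ∀ x ∈ P, ∃ n : ℕ, orderOf x = p ^ n)
    (hQ : ∀ y ∈ Q, ∃ n : ℕ, orderOf y = q ^ n) :
    ⁅P, Q⁆ = (⊥ : Subgroup N) := by
  rw [eq_bot_iff, Subgroup.commutator_le]
  intro x hx y hy
  obtain ⟨n, hn⟩ := hP x hx
  obtain ⟨m, hm⟩ := hQ y hy
  have hco : (orderOf x).Coprime (orderOf y) := by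
    rw [hn, hm]
    exact Nat.Coprime.pow _ _ ((Nat.coprime_primes hp hq).mpr hpq)
  have hcomm := commute_of_coprime_orders hN x y hco
    (by rw [hn]; exact pow_ne_zero _ hp.pos.ne')
    (by rw [hm]; exact pow_ne_zero _ hq.pos.ne')
  rw [Subgroup.mem_bot]
  exact commutatorElement_eq_one_iff_commute.mpr hcomm
end

section
/- Let G be a divisible nilpotent group (for every g ∈ G and every positive integer n there exists h ∈ G with hⁿ = g). Then every torsion element of G lies in the center of G. -/
open Subgroup
open scoped commutatorElement

private lemma comm_pow_right {G : Type*} [Group G] (g h : G)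
    (hz : ∀ y : G, ⁅g, y⁆ ∈ Subgroup.center G) :
    ∀ m : ℕ, ⁅g, h ^ m⁆ = ⁅g, h⁆ ^ m := by
  intro m
  induction m with
  | zero => simp
  | succ n ih =>
    have key : ⁅g, h ^ (n+1)⁆ = ⁅g, h⁆ * (h * ⁅g, h ^ n⁆ * h⁻¹) := by
      simp only [commutatorElement_def]
      group
    have hc := (Subgroup.mem_center_iff.mp (hz (h ^ n))) h⁻¹
    rw [key]
    calc ⁅g, h⁆ * (h * ⁅g, h ^ n⁆ * h⁻¹)
        = ⁅g, h⁆ * (h * (⁅g, h ^ n⁆ * h⁻¹)) := by group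
      _ = ⁅g, h⁆ * (h * (h⁻¹ * ⁅g, h ^ n⁆)) := by rw [hc]
      _ = ⁅g, h⁆ * ⁅g, h ^ n⁆ := by group
      _ = ⁅g, h⁆ * ⁅g, h⁆ ^ n := by rw [ih]
      _ = ⁅g, h⁆ ^ (n + 1) := by rw [pow_succ']

private lemma comm_pow_left {G : Type*} [Group G] (g h : G)
    (hz : ∀ y : G, ⁅g, y⁆ ∈ Subgroup.center G) :
    ∀ m : ℕ, ⁅g ^ m, h⁆ = ⁅g, h⁆ ^ m := by
  intro m
  induction m with
  | zero => simp
  | succ n ih =>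
    have key : ⁅g ^ (n+1), h⁆ = (g ^ n * ⁅g, h⁆ * (g ^ n)⁻¹) * ⁅g ^ n, h⁆ := by
      simp only [commutatorElement_def]
      group
    have hc := (Subgroup.mem_center_iff.mp (hz h)) (g ^ n)⁻¹
    rw [key, ih]
    calc (g ^ n * ⁅g, h⁆ * (g ^ n)⁻¹) * ⁅g, h⁆ ^ n
        = g ^ n * (⁅g, h⁆ * (g ^ n)⁻¹) * ⁅g, h⁆ ^ n := by group
      _ = g ^ n * ((g ^ n)⁻¹ * ⁅g, h⁆) * ⁅g, h⁆ ^ n := by rw [hc]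
      _ = ⁅g, h⁆ * ⁅g, h⁆ ^ n := by group
      _ = ⁅g, h⁆ ^ (n + 1) := by rw [pow_succ']

private lemma aux_central (G : Type*) [Group G] [Group.IsNilpotent G] :
    (∀ (g : G) (n : ℕ), 0 < n → ∃ h : G, h ^ n = g) →
      ∀ g : G, IsOfFinOrder g → g ∈ Subgroup.center G := by
  refine nilpotent_center_quotient_ind
      (P := fun G _ _ => (∀ (g : G) (n : ℕ), 0 < n → ∃ h : G, h ^ n = g) →
        ∀ g : G, IsOfFinOrder g → g ∈ Subgroup.center G) G
      (fun G _ _ => ?_) (fun G _ _ ih => ?_)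
  · intro _ g _; exact Subsingleton.elim g 1 ▸ Subgroup.one_mem _
  · 
    intro hdiv g hg
    -- divisibility for the quotient
    have hdiv' : ∀ (q : G ⧸ Subgroup.center G) (n : ℕ), 0 < n → ∃ h, h ^ n = q := by
      intro q n hn
      obtain ⟨x, rfl⟩ := QuotientGroup.mk_surjective q
      obtain ⟨h, hh⟩ := hdiv x n hn
      exact ⟨(h : G ⧸ Subgroup.center G), by rw [← hh]; rfl⟩
    have hgq : IsOfFinOrder ((g : G) : G ⧸ Subgroup.center G) :=
      (QuotientGroup.mk' (Subgroup.center G)).isOfFinOrder hg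
    have hcen := ih hdiv' _ hgq
    -- hence all commutators ⁅g, y⁆ are central
    have hz : ∀ y : G, ⁅g, y⁆ ∈ Subgroup.center G := by
      intro y
      have := (Subgroup.mem_center_iff.mp hcen) (y : G ⧸ Subgroup.center G)
      have h1 : ((⁅g, y⁆ : G) : G ⧸ Subgroup.center G) = 1 := by
        rw [commutatorElement_def]
        simp only [QuotientGroup.mk_mul, QuotientGroup.mk_inv]
        rw [mul_inv_eq_one, mul_inv_eq_iff_eq_mul]
        exact this.symm
      rwa [← QuotientGroup.eq_one_iff]
    rw [Subgroup.mem_center_iff]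
    intro x
    set n := orderOf g with hn
    have hnpos : 0 < n := hg.orderOf_pos
    obtain ⟨h, hh⟩ := hdiv x n hnpos
    have key : ⁅g, x⁆ = 1 := by
      rw [← hh, comm_pow_right g h hz n, ← comm_pow_left g h hz n,
        hn, pow_orderOf_eq_one, commutatorElement_one_left]
    exact (commutatorElement_eq_one_iff_mul_comm.mp key).symm

/-- In a divisible nilpotent group, every torsion element is central. -/
theorem stmt_3 {G : Type*} [Group G] (hG : Group.IsNilpotent G)
    (hdiv : ∀ (g : G) (n : ℕ), 0 < n → ∃ h : G, h ^ n = g)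
    (g : G) (hg : IsOfFinOrder g) :
    g ∈ Subgroup.center G := by
  exact aux_central G hdiv g hg
end
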